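/- arXiv:2605.27007 — 5 statements merged into one kernel-verified Lean document; each statement's English description precedes it below -/
import Mathlib

section
/- A polytope P ⊆ ℝ^d is locally anti-blocking if and only if for every vertex v of P and every subset I ⊆ {1,...,d}, the point π_I(v) obtained from v by setting all coordinates indexed by I to zero lies in P. -/
open Set

/-- A polytope: the convex hull of a finite set of points. -/
def IsPolytope {ι : Type*} (P : Set (ι → ℝ)) : Prop :=
  ∃ V : Finset (ι → ℝ), P = convexHull ℝ (V : Set (ι → ℝ))

/-- A set `Q` (inside the nonnegative orthant) is anti-blocking if it is closed under
coordinatewise decrease within the nonnegative orthant. -/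
def AntiBlocking {ι : Type*} (Q : Set (ι → ℝ)) : Prop :=
  ∀ x ∈ Q, ∀ y : ι → ℝ, (∀ i, 0 ≤ y i ∧ y i ≤ x i) → y ∈ Q

/-- A polytope `P` is locally anti-blocking if for every sign vector `σ ∈ {-1,1}^d`,
the restriction of `σP` to the nonnegative orthant is anti-blocking. -/
def LocallyAntiBlocking {ι : Type*} (P : Set (ι → ℝ)) : Prop :=
  ∀ σ : ι → ℝ, (∀ i, σ i = 1 ∨ σ i = -1) →
    AntiBlocking (((fun x i => σ i * x i) '' P) ∩ {x : ι → ℝ | ∀ i, 0 ≤ x i})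

/-!
Write `t * x` for the coordinatewise product. Flipping signs with `σ` shows that `P` is locally
anti-blocking exactly when `t * x ∈ P` for all `x ∈ P` and `t ∈ [0,1]^d`. For a convex `P` this
follows from the case where `t` has a single coordinate equal to `0` and all others `1`, because
`Pi.mulSingle i c = c • 1 + (1 - c) • Pi.mulSingle i 0` and every `t` is a product of such
`Pi.mulSingle i (t i)`. Finally, `x ↦ t * x` is linear and a polytope is the convex hull of its
vertices, so it suffices to check `t * v ∈ P` at the vertices `v`.
-/

theorem convexHull_extremePoints_convexHull_of_finite {E : Type*} [AddCommGroup E] [Module ℝ E]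
    [TopologicalSpace E] [T2Space E] [IsTopologicalAddGroup E] [ContinuousSMul ℝ E]
    [LocallyConvexSpace ℝ E] {s : Set E} (hs : s.Finite) :
    convexHull ℝ ((convexHull ℝ s).extremePoints ℝ) = convexHull ℝ s := by
  have hfin : ((convexHull ℝ s).extremePoints ℝ).Finite :=
    hs.subset extremePoints_convexHull_subset
  rw [← (hfin.isClosed_convexHull ℝ).closure_eq]
  exact closure_convexHull_extremePoints (hs.isCompact_convexHull ℝ) (convex_convexHull ℝ s)

section CoordinatewiseScaling

variable {ι : Type*}

theorem ite_mem_zero_one_mul [DecidableEq ι] (I : Finset ι) (v : ι → ℝ) :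
    (fun i => if i ∈ I then (0 : ℝ) else 1) * v = fun i => if i ∈ I then 0 else v i := by
  funext i
  by_cases hi : i ∈ I <;> simp [hi]

theorem mulSingle_zero_eq_ite_mem [DecidableEq ι] (i : ι) :
    Pi.mulSingle i (0 : ℝ) = fun j => if j ∈ ({i} : Finset ι) then (0 : ℝ) else 1 := by
  funext j
  by_cases hj : j = i <;> simp [hj]

theorem mul_mem_of_mem_convexHull {P E : Set (ι → ℝ)} (hP : Convex ℝ P) (t : ι → ℝ)
    (hE : ∀ e ∈ E, t * e ∈ P) {x : ι → ℝ} (hx : x ∈ convexHull ℝ E) : t * x ∈ P := by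
  have himage : t * x ∈ convexHull ℝ (LinearMap.mulLeft ℝ t '' E) := by
    rw [← LinearMap.image_convexHull]
    exact mem_image_of_mem _ hx
  exact convexHull_min (image_subset_iff.2 hE) hP himage

theorem mulSingle_eq_smul_one_add_smul_mulSingle_zero [DecidableEq ι] (i : ι) (c : ℝ) :
    Pi.mulSingle i c = c • (1 : ι → ℝ) + (1 - c) • Pi.mulSingle i 0 := by
  funext j
  by_cases hj : j = i
  · subst hj; simp
  · simp [hj]

theorem mulSingle_mul_mem [DecidableEq ι] {P : Set (ι → ℝ)} (hP : Convex ℝ P)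
    (hzero : ∀ i, ∀ x ∈ P, Pi.mulSingle i 0 * x ∈ P) (i : ι) {c : ℝ} (hc : c ∈ Icc 0 1)
    {x : ι → ℝ} (hx : x ∈ P) : Pi.mulSingle i c * x ∈ P := by
  rw [mulSingle_eq_smul_one_add_smul_mulSingle_zero, add_mul, smul_mul_assoc, smul_mul_assoc,
    one_mul]
  exact hP hx (hzero i x hx) hc.1 (sub_nonneg.2 hc.2) (add_sub_cancel c 1)

theorem mul_mem_of_mulSingle_zero_mul_mem [Fintype ι] [DecidableEq ι] {P : Set (ι → ℝ)}
    (hP : Convex ℝ P) (hzero : ∀ i, ∀ x ∈ P, Pi.mulSingle i 0 * x ∈ P) {t : ι → ℝ}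
    (ht : t ∈ Icc 0 1) {x : ι → ℝ} (hx : x ∈ P) : t * x ∈ P := by
  rw [← Finset.univ_prod_mulSingle t]
  refine Finset.prod_induction _ (fun a => ∀ y ∈ P, a * y ∈ P) ?_ ?_ ?_ x hx
  · intro a b ha hb y hy
    rw [mul_assoc]
    exact ha _ (hb y hy)
  · intro y hy
    rwa [one_mul]
  · intro i _ y hy
    exact mulSingle_mul_mem hP hzero i ⟨ht.1 i, ht.2 i⟩ hy

theorem div_mul_cancel_of_nonneg_of_le {x y : ι → ℝ} (hy : ∀ i, 0 ≤ y i ∧ y i ≤ x i) :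
    y / x * x = y := by
  funext i
  obtain ⟨hy0, hyx⟩ := hy i
  rcases eq_or_ne (x i) 0 with hxi | hxi
  · simp [hxi, le_antisymm (hxi ▸ hyx) hy0]
  · exact div_mul_cancel₀ (y i) hxi

theorem mul_self_eq_one_of_sign {σ : ι → ℝ} (hσ : ∀ i, σ i = 1 ∨ σ i = -1) : σ * σ = 1 := by
  funext i
  rcases hσ i with h | h <;> simp [h]

theorem LocallyAntiBlocking.mul_mem {P : Set (ι → ℝ)} (h : LocallyAntiBlocking P) {x : ι → ℝ}
    (hx : x ∈ P) {t : ι → ℝ} (ht : t ∈ Icc 0 1) : t * x ∈ P := by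
  set σ : ι → ℝ := fun i => if 0 ≤ x i then 1 else -1
  have hσ : ∀ i, σ i = 1 ∨ σ i = -1 := fun i => by by_cases h : 0 ≤ x i <;> simp [σ, h]
  have hσx : ∀ i, 0 ≤ σ i * x i := fun i => by
    by_cases h : 0 ≤ x i
    · simp [σ, h]
    · simp [σ, h]; linarith
  obtain ⟨⟨p, hp, hσp⟩, -⟩ := h σ hσ (σ * x) ⟨⟨x, hx, rfl⟩, hσx⟩ (t * (σ * x)) fun i =>
    ⟨mul_nonneg (ht.1 i) (hσx i), mul_le_of_le_one_left (hσx i) (ht.2 i)⟩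
  change σ * p = t * (σ * x) at hσp
  have hpt : p = t * x := by
    calc p = (σ * σ) * p := by rw [mul_self_eq_one_of_sign hσ, one_mul]
      _ = (σ * σ) * (t * x) := by rw [mul_assoc, hσp]; ring
      _ = t * x := by rw [mul_self_eq_one_of_sign hσ, one_mul]
  exact hpt ▸ hp

theorem locallyAntiBlocking_of_mul_mem {P : Set (ι → ℝ)}
    (h : ∀ x ∈ P, ∀ t ∈ Icc (0 : ι → ℝ) 1, t * x ∈ P) : LocallyAntiBlocking P := by
  rintro σ - _ ⟨⟨p, hp, rfl⟩, -⟩ y hy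
  -- Where `σ * p` vanishes so does `y`, so the junk value `y i / 0 = 0` does no harm.
  have ht : y / (σ * p) ∈ Icc (0 : ι → ℝ) 1 :=
    ⟨fun i => div_nonneg (hy i).1 ((hy i).1.trans (hy i).2),
      fun i => div_le_one_of_le₀ (hy i).2 ((hy i).1.trans (hy i).2)⟩
  refine ⟨⟨y / (σ * p) * p, h p hp _ ht, ?_⟩, fun i => (hy i).1⟩
  change σ * (y / (σ * p) * p) = y
  rw [mul_left_comm]
  exact div_mul_cancel_of_nonneg_of_le hy

theorem locallyAntiBlocking_iff_mul_mem {P : Set (ι → ℝ)} :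
    LocallyAntiBlocking P ↔ ∀ x ∈ P, ∀ t ∈ Icc (0 : ι → ℝ) 1, t * x ∈ P :=
  ⟨fun h _ hx _ ht => h.mul_mem hx ht, locallyAntiBlocking_of_mul_mem⟩

end CoordinatewiseScaling

/-- A polytope `P ⊆ ℝ^d` is locally anti-blocking iff for every vertex `v`
of `P` and every subset `I ⊆ {1,…,d}`, the point obtained from `v` by setting the
coordinates indexed by `I` to zero lies in `P`. -/
theorem locallyAntiBlocking_iff_vertex_projections {d : ℕ} (P : Set (Fin d → ℝ))
    (hP : IsPolytope P) :
    LocallyAntiBlocking P ↔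
      ∀ v ∈ Set.extremePoints ℝ P, ∀ I : Finset (Fin d),
        (fun i => if i ∈ I then 0 else v i) ∈ P := by
  obtain ⟨V, rfl⟩ := hP
  rw [locallyAntiBlocking_iff_mul_mem]
  constructor
  · intro h v hv I
    have hI : (fun i => if i ∈ I then (0 : ℝ) else 1) ∈ Icc (0 : Fin d → ℝ) 1 :=
      ⟨fun i => by by_cases hi : i ∈ I <;> simp [hi], fun i => by by_cases hi : i ∈ I <;> simp [hi]⟩
    simpa only [ite_mem_zero_one_mul] using h v hv.1 _ hI
  · intro h x hx t ht
    refine mul_mem_of_mulSingle_zero_mul_mem (convex_convexHull ℝ _) (fun i y hy => ?_) ht hx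
    rw [← convexHull_extremePoints_convexHull_of_finite V.finite_toSet] at hy
    refine mul_mem_of_mem_convexHull (convex_convexHull ℝ _) _ (fun v hv => ?_) hy
    rw [mulSingle_zero_eq_ite_mem, ite_mem_zero_one_mul]
    exact h v hv {i}
end

section
/- If P ⊆ ℝ^m and Q ⊆ ℝ^n are locally anti-blocking polytopes each containing the origin in its interior, then their free sum P ⊕ Q = conv((P × {0}) ∪ ({0} × Q)) ⊆ ℝ^{m+n} is locally anti-blocking. -/
open Set

/-- The free sum of `P ⊆ ℝ^m` and `Q ⊆ ℝ^n` (each containing the origin):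
`conv((P × {0}) ∪ ({0} × Q)) ⊆ ℝ^{m+n}`. -/
def freeSum {m n : ℕ} (P : Set (Fin m → ℝ)) (Q : Set (Fin n → ℝ)) :
    Set (Fin (m + n) → ℝ) :=
  convexHull ℝ
    (((fun x => Fin.append x (0 : Fin n → ℝ)) '' P) ∪
      ((fun y => Fin.append (0 : Fin m → ℝ) y) '' Q))

/-!
Locally anti-blocking means that with every point `x` the set contains the whole box `uIcc 0 x`
between the origin and `x`: the sign vector matching `x` turns that box into the order interval
below `|x|` in the orthant. A point of `P ⊕ Q` is `(a • u, b • v)` with `u ∈ P`, `v ∈ Q` and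
`a + b = 1`, and the box below it is `a • uIcc 0 u × b • uIcc 0 v`, which again consists of such
points.
-/

open Pointwise

def ShrinkClosed {ι : Type*} (S : Set (ι → ℝ)) : Prop :=
  ∀ x ∈ S, uIcc 0 x ⊆ S

lemma mem_uIcc_pi {ι : Type*} {α : ι → Type*} [∀ i, Lattice (α i)] {a b z : ∀ i, α i} :
    z ∈ uIcc a b ↔ ∀ i, z i ∈ uIcc (a i) (b i) := by
  rw [← pi_univ_uIcc, mem_univ_pi]

section UIcc

variable {𝕜 ι : Type*} [Field 𝕜] [LinearOrder 𝕜] [IsStrictOrderedRing 𝕜]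

lemma mul_mem_uIcc_zero (c : 𝕜) {y w : 𝕜} (h : y ∈ uIcc 0 w) : c * y ∈ uIcc 0 (c * w) := by
  have := mem_image_of_mem (c * ·) h
  rwa [image_const_mul_uIcc, mul_zero] at this

lemma uIcc_zero_smul (a : 𝕜) (x : ι → 𝕜) : uIcc 0 (a • x) = a • uIcc 0 x := by
  refine Subset.antisymm (fun z hz => ?_) ?_
  · rcases eq_or_ne a 0 with rfl | ha
    · rw [zero_smul, uIcc_self, mem_singleton_iff] at hz
      exact ⟨0, left_mem_uIcc, by simp [hz]⟩
    refine ⟨a⁻¹ • z, mem_uIcc_pi.2 fun i => ?_, smul_inv_smul₀ ha z⟩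
    simpa [inv_mul_cancel_left₀ ha] using mul_mem_uIcc_zero a⁻¹ (mem_uIcc_pi.1 hz i)
  · rintro _ ⟨w, hw, rfl⟩
    exact mem_uIcc_pi.2 fun i => mul_mem_uIcc_zero a (mem_uIcc_pi.1 hw i)

end UIcc

lemma signFlip_involutive {ι : Type*} {σ : ι → ℝ} (hσ : ∀ i, σ i = 1 ∨ σ i = -1) :
    Function.Involutive (fun (x : ι → ℝ) i => σ i * x i) := fun x => funext fun i => by
  change σ i * (σ i * x i) = x i
  rw [← mul_assoc, mul_self_eq_one_iff.2 (hσ i), one_mul]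

theorem locallyAntiBlocking_iff_shrinkClosed {ι : Type*} {S : Set (ι → ℝ)} :
    LocallyAntiBlocking S ↔ ShrinkClosed S := by
  constructor
  · intro h x hx z hz
    let σ : ι → ℝ := fun i => if 0 ≤ x i then 1 else -1
    have hσ : ∀ i, σ i = 1 ∨ σ i = -1 := fun i => by by_cases hi : 0 ≤ x i <;> simp [σ, hi]
    have hσx : ∀ i, 0 ≤ σ i * x i := fun i => by
      simp only [σ]
      split_ifs with hi <;> linarith
    have hσz : ∀ i, 0 ≤ σ i * z i ∧ σ i * z i ≤ σ i * x i := fun i => by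
      rw [← mem_Icc, ← uIcc_of_le (hσx i)]
      exact mul_mem_uIcc_zero (σ i) (mem_uIcc_pi.1 hz i)
    obtain ⟨⟨w, hw, hwz⟩, -⟩ := h σ hσ _ ⟨⟨x, hx, rfl⟩, hσx⟩ _ hσz
    rwa [← (signFlip_involutive hσ).injective hwz]
  · rintro h σ hσ _ ⟨⟨w, hw, rfl⟩, -⟩ y hy
    refine ⟨⟨_, h w hw (mem_uIcc_pi.2 fun i => ?_), signFlip_involutive hσ y⟩, fun i => (hy i).1⟩
    have := mul_mem_uIcc_zero (σ i) (mem_uIcc_of_le (hy i).1 (hy i).2)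
    rwa [← mul_assoc, mul_self_eq_one_iff.2 (hσ i), one_mul] at this

lemma IsPolytope.convex {ι : Type*} {P : Set (ι → ℝ)} (h : IsPolytope P) : Convex ℝ P := by
  obtain ⟨V, rfl⟩ := h
  exact convex_convexHull ℝ _

namespace Fin

variable {α : Type*} {m n : ℕ}

lemma append_add_append [Add α] (u u' : Fin m → α) (v v' : Fin n → α) :
    append u v + append u' v' = append (u + u') (v + v') := by
  funext j
  refine addCases (fun i => ?_) (fun i => ?_) j <;> simp

lemma smul_append {M : Type*} [SMul M α] (a : M) (u : Fin m → α) (v : Fin n → α) :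
    a • append u v = append (a • u) (a • v) := by
  funext j
  refine addCases (fun i => ?_) (fun i => ?_) j <;> simp

lemma append_mem_uIcc_zero {𝕜 : Type*} [Field 𝕜] [LinearOrder 𝕜] [IsStrictOrderedRing 𝕜]
    {u u' : Fin m → 𝕜} {v v' : Fin n → 𝕜} :
    append u' v' ∈ uIcc 0 (append u v) ↔ u' ∈ uIcc 0 u ∧ v' ∈ uIcc 0 v := by
  simp [mem_uIcc_pi, forall_fin_add]

end Fin

section FreeSum

variable {m n : ℕ} {P : Set (Fin m → ℝ)} {Q : Set (Fin n → ℝ)}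

lemma mem_freeSum (hPc : Convex ℝ P) (hQc : Convex ℝ Q) (hPne : P.Nonempty) (hQne : Q.Nonempty)
    {x : Fin (m + n) → ℝ} :
    x ∈ freeSum P Q ↔ ∃ u ∈ P, ∃ v ∈ Q, ∃ a b : ℝ,
      0 ≤ a ∧ 0 ≤ b ∧ a + b = 1 ∧ Fin.append (a • u) (b • v) = x := by
  have hA : Convex ℝ ((fun u => Fin.append u (0 : Fin n → ℝ)) '' P) :=
    hPc.is_linear_image ⟨fun u v => by rw [Fin.append_add_append, add_zero],
      fun a u => by rw [Fin.smul_append, smul_zero]⟩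
  have hB : Convex ℝ ((fun v => Fin.append (0 : Fin m → ℝ) v) '' Q) :=
    hQc.is_linear_image ⟨fun u v => by rw [Fin.append_add_append, add_zero],
      fun a u => by rw [Fin.smul_append, smul_zero]⟩
  rw [freeSum, convexHull_union (hPne.image _) (hQne.image _), hA.convexHull_eq, hB.convexHull_eq,
    mem_convexJoin]
  simp only [mem_image, segment, mem_ofPred_eq, exists_exists_and_eq_and,
    Fin.smul_append, Fin.append_add_append, smul_zero, add_zero, zero_add]

theorem ShrinkClosed.freeSum (hP : ShrinkClosed P) (hQ : ShrinkClosed Q) (hPc : Convex ℝ P)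
    (hQc : Convex ℝ Q) (hPne : P.Nonempty) (hQne : Q.Nonempty) : ShrinkClosed (freeSum P Q) := by
  intro x hx z hz
  obtain ⟨u, hu, v, hv, a, b, ha, hb, hab, rfl⟩ := (mem_freeSum hPc hQc hPne hQne).1 hx
  rw [← Fin.append_castAdd_natAdd (f := z), Fin.append_mem_uIcc_zero, uIcc_zero_smul,
    uIcc_zero_smul] at hz
  obtain ⟨⟨u', hu', hzu⟩, ⟨v', hv', hzv⟩⟩ := hz
  rw [← Fin.append_castAdd_natAdd (f := z), ← hzu, ← hzv]
  exact (mem_freeSum hPc hQc hPne hQne).2 ⟨u', hP u hu hu', v', hQ v hv hv', a, b, ha, hb, hab, rfl⟩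

end FreeSum

/-- The free sum of two locally anti-blocking polytopes, each containing
the origin in its interior, is locally anti-blocking. -/
theorem freeSum_locallyAntiBlocking {m n : ℕ}
    (P : Set (Fin m → ℝ)) (Q : Set (Fin n → ℝ))
    (hP : IsPolytope P) (hQ : IsPolytope Q)
    (hP0 : (0 : Fin m → ℝ) ∈ interior P) (hQ0 : (0 : Fin n → ℝ) ∈ interior Q)
    (hPlab : LocallyAntiBlocking P) (hQlab : LocallyAntiBlocking Q) :
    LocallyAntiBlocking (freeSum P Q) := by
  rw [locallyAntiBlocking_iff_shrinkClosed] at hPlab hQlab ⊢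
  exact hPlab.freeSum hQlab hP.convex hQ.convex ⟨0, interior_subset hP0⟩ ⟨0, interior_subset hQ0⟩
end

section
/- Let G_1,...,G_t be DAGs sharing a common source and sink, with pairwise disjoint inner vertex sets, and let G be their union. Then the flow polytope F_1(G) is integrally equivalent to the join F_1(G_1) ⋆ F_1(G_2) ⋆ ... ⋆ F_1(G_t). -/
open Set

/-- `IsWalkFrom src tgt L a b`: the list of edges `L` forms a directed walk from `a` to `b`. -/
def IsWalkFrom {V E : Type*} (src tgt : E → V) : List E → V → V → Prop
  | [], a, b => a = b
  | e :: es, a, b => src e = a ∧ IsWalkFrom src tgt es (tgt e) b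

/-- The indicator vector of a list of edges. -/
def routeIndicator {E : Type*} [DecidableEq E] (L : List E) : E → ℝ :=
  fun e => if e ∈ L then 1 else 0

/-- The flow polytope of a DAG with source `s0` and sink `t0`: the convex hull of the
indicator vectors of its routes. -/
noncomputable def flowPolytope {V E : Type*} [DecidableEq E] (src tgt : E → V)
    (s0 t0 : V) : Set (E → ℝ) :=
  convexHull ℝ {x : E → ℝ | ∃ L : List E, L ≠ [] ∧ IsWalkFrom src tgt L s0 t0 ∧
    x = routeIndicator L}

/-- Integral equivalence of two subsets of real coordinate spaces. -/
def IntegrallyEquivalent {ι₁ ι₂ : Type*} (A : Set (ι₁ → ℝ)) (B : Set (ι₂ → ℝ)) : Prop :=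
  ∃ f : (ι₁ → ℝ) →ᵃ[ℝ] (ι₂ → ℝ),
    Set.BijOn f A B ∧
    ∀ x ∈ A, ((∀ i, ∃ z : ℤ, x i = (z : ℝ)) ↔ (∀ j, ∃ z : ℤ, f x j = (z : ℝ)))

/-- Embedding of the `i`-th factor into the ambient space of the `t`-fold join. -/
def joinEmb {t : ℕ} (E : Fin t → Type) [DecidableEq (Fin t)] (i : Fin t)
    (x : E i → ℝ) : ((Σ j, E j) ⊕ Fin t) → ℝ :=
  fun c =>
    Sum.rec
      (fun p => if h : p.1 = i then x (cast (congrArg E h) p.2) else 0)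
      (fun j => if j = i then 1 else 0) c

/-- The join of the family of polytopes `P i ⊆ ℝ^{E i}`, realized in skew affine
subspaces at pairwise lattice distance one. -/
noncomputable def polytopeJoin {t : ℕ} (E : Fin t → Type)
    (P : ∀ i : Fin t, Set (E i → ℝ)) : Set (((Σ j, E j) ⊕ Fin t) → ℝ) :=
  convexHull ℝ (⋃ i, joinEmb E i '' P i)

/-!
The equivalence is the linear map `x ↦ (x, λ x)`, where `λᵢ x` is the flow leaving `s0` through
`Gᵢ`. Consecutive edges of a route share an inner vertex, so every route of `G` runs inside a
single `Gᵢ`; no edge enters `s0`, so it leaves `s0` exactly once, and the map sends it to the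
corresponding vertex of the `i`-th factor of the join. The map is injective, so it is a bijection
of the convex hulls, and `λ` has integer coefficients, so lattice points correspond. The edge sets
may be infinite: `λ` is only defined by a finite sum on finitely supported vectors, which contain
the flow polytope, and is extended linearly to the whole space.
-/

section Walks

variable {V E : Type*} {src tgt : E → V}

theorem isWalkFrom_map {E' : Type*} (g : E' → E) :
    ∀ (L : List E') (a b : V),
      IsWalkFrom src tgt (L.map g) a b ↔ IsWalkFrom (src ∘ g) (tgt ∘ g) L a b
  | [], _, _ => Iff.rfl
  | _ :: es, _, _ => and_congr_right fun _ => isWalkFrom_map g es _ _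

theorem IsWalkFrom.exists_tgt_eq_src_of_mem_tail :
    ∀ {e : E} {es : List E} {a b : V}, IsWalkFrom src tgt (e :: es) a b →
      ∀ e' ∈ es, ∃ e'', tgt e'' = src e'
  | _, [], _, _, _, _, h => absurd h List.not_mem_nil
  | e, _ :: _, _, _, ⟨_, h₂, hw⟩, e', he' => by
      rcases List.mem_cons.1 he' with rfl | he'
      · exact ⟨e, h₂.symm⟩
      · exact IsWalkFrom.exists_tgt_eq_src_of_mem_tail ⟨h₂, hw⟩ e' he'

theorem IsWalkFrom.sum_ite_src_eq [DecidableEq E] [DecidableEq V] {M : Type*}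
    [AddCommMonoid M] {e : E} {es : List E} {a b : V} (ha : ∀ e, tgt e ≠ a)
    (hw : IsWalkFrom src tgt (e :: es) a b) (f : E → M) :
    ∑ e' ∈ (e :: es).toFinset, (if src e' = a then f e' else 0) = f e := by
  have hfilter : (e :: es).toFinset.filter (fun e' => src e' = a) = {e} := by
    ext e'
    simp only [Finset.mem_filter, List.mem_toFinset, List.mem_cons, Finset.mem_singleton]
    constructor
    · rintro ⟨rfl | he', hsrc⟩
      · rfl
      · obtain ⟨e'', he''⟩ := hw.exists_tgt_eq_src_of_mem_tail e' he'
        exact absurd (he''.trans hsrc) (ha e'')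
    · rintro rfl
      exact ⟨.inl rfl, hw.1⟩
  rw [← Finset.sum_filter, hfilter, Finset.sum_singleton]

end Walks

section Sigma

variable {V ι : Type*} {E : ι → Type*} {src tgt : ∀ i, E i → V}

theorem isWalkFrom_map_sigmaMk {i : ι} {L : List (E i)} {a b : V} :
    IsWalkFrom (fun e : Σ i, E i => src e.1 e.2) (fun e => tgt e.1 e.2)
        (L.map (Sigma.mk i)) a b ↔ IsWalkFrom (src i) (tgt i) L a b :=
  isWalkFrom_map _ L a b

theorem IsWalkFrom.exists_eq_map_sigmaMk
    (hconn : ∀ e e' : Σ i, E i, tgt e.1 e.2 = src e'.1 e'.2 → e.1 = e'.1) :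
    ∀ {L : List (Σ i, E i)} {a b : V}, L ≠ [] →
      IsWalkFrom (fun e => src e.1 e.2) (fun e => tgt e.1 e.2) L a b →
      ∃ i, ∃ L' : List (E i), L' ≠ [] ∧ L = L'.map (Sigma.mk i)
  | [], _, _, h, _ => absurd rfl h
  | [⟨i, x⟩], _, _, _, _ => ⟨i, [x], List.cons_ne_nil _ _, rfl⟩
  | ⟨i, x⟩ :: e₂ :: es, _, _, _, ⟨_, hw⟩ => by
      obtain ⟨j, L', hne, hL⟩ :=
        IsWalkFrom.exists_eq_map_sigmaMk hconn (List.cons_ne_nil _ _) hw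
      obtain ⟨y, L'', rfl⟩ := List.exists_cons_of_ne_nil hne
      obtain ⟨rfl, -⟩ := List.cons_eq_cons.1 hL
      obtain rfl : i = j := hconn ⟨i, x⟩ ⟨j, y⟩ hw.1.symm
      exact ⟨i, x :: y :: L'', List.cons_ne_nil _ _, by rw [hL]; rfl⟩

end Sigma

def routeVectors {V E : Type*} [DecidableEq E] (src tgt : E → V) (s0 t0 : V) : Set (E → ℝ) :=
  {x | ∃ L : List E, L ≠ [] ∧ IsWalkFrom src tgt L s0 t0 ∧ x = routeIndicator L}

theorem flowPolytope_eq_convexHull_routeVectors {V E : Type*} [DecidableEq E]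
    (src tgt : E → V) (s0 t0 : V) :
    flowPolytope src tgt s0 t0 = convexHull ℝ (routeVectors src tgt s0 t0) := rfl

def IsLatticePoint {ι : Type*} (x : ι → ℝ) : Prop :=
  ∀ i, ∃ z : ℤ, x i = (z : ℝ)

section Finsupp

variable {α β : Type*}

theorem exists_comp_lcoeFun_eq {K M : Type*} [Field K] [AddCommGroup M] [Module K M]
    (f : (α →₀ K) →ₗ[K] M) : ∃ g : (α → K) →ₗ[K] M, g ∘ₗ Finsupp.lcoeFun = f := by
  obtain ⟨r, hr⟩ := LinearMap.exists_leftInverse_of_injective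
    (Finsupp.lcoeFun (α := α) (M := K) (R := K)) (LinearMap.ker_eq_bot.2 DFunLike.coe_injective)
  exact ⟨f ∘ₗ r, by rw [LinearMap.comp_assoc, hr, LinearMap.comp_id]⟩

theorem IsLatticePoint.linearCombination {v : α → β → ℝ} (hv : ∀ a, IsLatticePoint (v a))
    {f : α →₀ ℝ} (hf : IsLatticePoint f) :
    IsLatticePoint (Finsupp.linearCombination ℝ v f) := by
  intro b
  rw [Finsupp.linearCombination_apply, Finsupp.sum, Finset.sum_apply]
  refine Finset.sum_induction _ (fun r : ℝ => ∃ z : ℤ, r = z) ?_ ⟨0, by simp⟩ fun a _ => ?_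
  · rintro _ _ ⟨m, rfl⟩ ⟨n, rfl⟩
    exact ⟨m + n, by push_cast; rfl⟩
  · obtain ⟨m, hm⟩ := hf a
    obtain ⟨n, hn⟩ := hv a b
    exact ⟨m * n, by simp [hm, hn]⟩

theorem linearCombination_sum_single {M : Type*} [AddCommMonoid M] [Module ℝ M] (v : α → M)
    (s : Finset α) :
    Finsupp.linearCombination ℝ v (∑ e ∈ s, Finsupp.single e (1 : ℝ)) = ∑ e ∈ s, v e := by
  simp [map_sum]

variable [DecidableEq α]

theorem routeIndicator_eq_coe_sum_single (L : List α) :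
    routeIndicator L = ⇑(∑ e ∈ L.toFinset, Finsupp.single e (1 : ℝ)) := by
  funext e
  simp [routeIndicator, Finsupp.finsetSum_apply, Finsupp.single_apply]

theorem flowPolytope_subset_range_coe {V : Type*} (src tgt : α → V) (s0 t0 : V) :
    flowPolytope src tgt s0 t0 ⊆ Set.range (DFunLike.coe : (α →₀ ℝ) → α → ℝ) := by
  refine convexHull_min ?_ (LinearMap.range (Finsupp.lcoeFun (R := ℝ))).convex
  rintro _ ⟨L, -, -, rfl⟩
  exact ⟨_, (routeIndicator_eq_coe_sum_single L).symm⟩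

end Finsupp

section AppendCoords

variable {α β : Type*}

def appendCoords (g : (α → ℝ) →ₗ[ℝ] (β → ℝ)) : (α → ℝ) →ₗ[ℝ] (α ⊕ β → ℝ) :=
  LinearMap.pi (Sum.elim LinearMap.proj fun b => LinearMap.proj b ∘ₗ g)

variable (g : (α → ℝ) →ₗ[ℝ] (β → ℝ))

@[simp]
theorem appendCoords_apply_inl (x : α → ℝ) (a : α) : appendCoords g x (.inl a) = x a := rfl

@[simp]
theorem appendCoords_apply_inr (x : α → ℝ) (b : β) : appendCoords g x (.inr b) = g x b := rfl

theorem appendCoords_injective : Function.Injective (appendCoords g) :=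
  fun _ _ h => funext fun a => congrFun h (.inl a)

theorem isLatticePoint_appendCoords_iff {v : α → β → ℝ} (hv : ∀ a, IsLatticePoint (v a))
    (hg : g ∘ₗ Finsupp.lcoeFun = Finsupp.linearCombination ℝ v) (f : α →₀ ℝ) :
    IsLatticePoint (appendCoords g f) ↔ IsLatticePoint f := by
  refine ⟨fun h a => h (.inl a), fun h => ?_⟩
  rintro (a | b)
  · exact h a
  · have hgf : g f = Finsupp.linearCombination ℝ v f := LinearMap.congr_fun hg f
    simpa [hgf] using IsLatticePoint.linearCombination hv h b

end AppendCoords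

/-- `Finsupp.linearCombination ℝ (sourceWeight src s0) x` is the vector of join coordinates of a
finitely supported flow `x`: its `i`-th entry is the flow leaving `s0` through `G_i`. -/
noncomputable def sourceWeight {V ι : Type*} [DecidableEq V] [DecidableEq ι] {E : ι → Type*}
    (src : ∀ i, E i → V) (s0 : V) (e : Σ i, E i) : ι → ℝ :=
  if src e.1 e.2 = s0 then Pi.single e.1 1 else 0

theorem isLatticePoint_sourceWeight {V ι : Type*} [DecidableEq V] [DecidableEq ι]
    {E : ι → Type*} (src : ∀ i, E i → V) (s0 : V) (e : Σ i, E i) :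
    IsLatticePoint (sourceWeight src s0 e) := by
  intro j
  unfold sourceWeight
  split_ifs
  · rcases eq_or_ne j e.1 with rfl | h
    · exact ⟨1, by simp⟩
    · exact ⟨0, by simp [h]⟩
  · exact ⟨0, by simp⟩

section Join

variable {t : ℕ} {E : Fin t → Type}

@[simp]
theorem joinEmb_inl_self (i : Fin t) (x : E i → ℝ) (y : E i) :
    joinEmb E i x (.inl ⟨i, y⟩) = x y := by
  simp [joinEmb]

theorem joinEmb_inl_of_ne {i j : Fin t} (h : j ≠ i) (x : E i → ℝ) (y : E j) :
    joinEmb E i x (.inl ⟨j, y⟩) = 0 := by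
  simp [joinEmb, h]

@[simp]
theorem joinEmb_inr (i : Fin t) (x : E i → ℝ) (j : Fin t) :
    joinEmb E i x (.inr j) = (Pi.single i 1 : Fin t → ℝ) j := by
  simp [joinEmb, Pi.single_apply]

end Join

noncomputable def joinEmbAffine {t : ℕ} (E : Fin t → Type) (i : Fin t) :
    (E i → ℝ) →ᵃ[ℝ] ((Σ j, E j) ⊕ Fin t → ℝ) where
  toFun := joinEmb E i
  linear := LinearMap.pi <| Sum.elim
    (fun q => if h : q.1 = i then LinearMap.proj (cast (congrArg E h) q.2) else 0) 0
  map_vadd' x v := by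
    funext c
    rcases c with ⟨j, y⟩ | j
    · by_cases h : j = i
      · subst h; simp
      · simp [joinEmb_inl_of_ne h, h]
    · simp

theorem polytopeJoin_convexHull {t : ℕ} {E : Fin t → Type} (S : ∀ i, Set (E i → ℝ)) :
    polytopeJoin E (fun i => convexHull ℝ (S i)) = convexHull ℝ (⋃ i, joinEmb E i '' S i) := by
  refine (convexHull_min (iUnion_subset fun i => ?_) (convex_convexHull ℝ _)).antisymm
    (convexHull_mono (iUnion_mono fun i => image_mono (subset_convexHull ℝ _)))
  change joinEmbAffine E i '' _ ⊆ _
  rw [AffineMap.image_convexHull]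
  exact convexHull_mono (subset_iUnion_of_subset i subset_rfl)

section Union

variable {V : Type*} [DecidableEq V] {t : ℕ} {E : Fin t → Type} [∀ i, DecidableEq (E i)]
  {src tgt : ∀ i, E i → V} {s0 : V} {g : ((Σ i, E i) → ℝ) →ₗ[ℝ] (Fin t → ℝ)}

theorem appendCoords_routeIndicator_map_sigmaMk (hs0 : ∀ i (e : E i), tgt i e ≠ s0)
    (hg : g ∘ₗ Finsupp.lcoeFun = Finsupp.linearCombination ℝ (sourceWeight src s0))
    {i : Fin t} {L : List (E i)} {b : V} (hne : L ≠ []) (hw : IsWalkFrom (src i) (tgt i) L s0 b) :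
    appendCoords g (routeIndicator (L.map (Sigma.mk i))) = joinEmb E i (routeIndicator L) := by
  obtain ⟨x, L, rfl⟩ := List.exists_cons_of_ne_nil hne
  funext c
  rcases c with ⟨j, y⟩ | j
  · by_cases h : j = i
    · subst h
      simp [routeIndicator]
    · simp [routeIndicator, joinEmb_inl_of_ne h, h, Ne.symm h]
  · rw [appendCoords_apply_inr, routeIndicator_eq_coe_sum_single,
      ← Finsupp.lcoeFun_apply (R := ℝ), ← LinearMap.comp_apply, hg, linearCombination_sum_single]
    simp only [sourceWeight, List.map_cons]
    rw [(isWalkFrom_map_sigmaMk.2 hw).sum_ite_src_eq (fun e => hs0 e.1 e.2), joinEmb_inr]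

theorem image_appendCoords_routeVectors {t0 : V}
    (hconn : ∀ e e' : Σ i, E i, tgt e.1 e.2 = src e'.1 e'.2 → e.1 = e'.1)
    (hs0 : ∀ i (e : E i), tgt i e ≠ s0)
    (hg : g ∘ₗ Finsupp.lcoeFun = Finsupp.linearCombination ℝ (sourceWeight src s0)) :
    appendCoords g '' routeVectors (fun e : Σ i, E i => src e.1 e.2) (fun e => tgt e.1 e.2) s0 t0 =
      ⋃ i, joinEmb E i '' routeVectors (src i) (tgt i) s0 t0 := by
  ext y
  simp only [routeVectors, mem_image, mem_iUnion, mem_ofPred_eq]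
  constructor
  · rintro ⟨_, ⟨L, hne, hw, rfl⟩, rfl⟩
    obtain ⟨i, L', hne', rfl⟩ := hw.exists_eq_map_sigmaMk hconn hne
    rw [isWalkFrom_map_sigmaMk] at hw
    exact ⟨i, _, ⟨L', hne', hw, rfl⟩, (appendCoords_routeIndicator_map_sigmaMk hs0 hg hne' hw).symm⟩
  · rintro ⟨i, _, ⟨L, hne, hw, rfl⟩, rfl⟩
    exact ⟨_, ⟨L.map (Sigma.mk i), by simpa using hne, isWalkFrom_map_sigmaMk.2 hw, rfl⟩,
      appendCoords_routeIndicator_map_sigmaMk hs0 hg hne hw⟩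

end Union

theorem flowPolytope_union_join_general {V : Type} (t : ℕ)
    (E : Fin t → Type) [∀ i, DecidableEq (E i)]
    (src tgt : ∀ i, E i → V) (s0 t0 : V)
    (hs0 : ∀ i (e : E i), tgt i e ≠ s0) (ht0 : ∀ i (e : E i), src i e ≠ t0)
    (hinner : ∀ i j, i ≠ j → ∀ v : V, v ≠ s0 → v ≠ t0 →
      ¬((∃ e : E i, src i e = v ∨ tgt i e = v) ∧
        (∃ e : E j, src j e = v ∨ tgt j e = v))) :
    IntegrallyEquivalent
      (flowPolytope (fun e : Σ j, E j => src e.1 e.2) (fun e : Σ j, E j => tgt e.1 e.2)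
        s0 t0)
      (polytopeJoin E (fun i => flowPolytope (src i) (tgt i) s0 t0)) := by
  classical
  have hconn (e e' : Σ i, E i) (h : tgt e.1 e.2 = src e'.1 e'.2) : e.1 = e'.1 := by
    by_contra hne
    exact hinner e.1 e'.1 hne _ (hs0 _ _) (h ▸ ht0 _ _) ⟨⟨e.2, .inr rfl⟩, ⟨e'.2, .inl h.symm⟩⟩
  obtain ⟨g, hg⟩ := exists_comp_lcoeFun_eq (Finsupp.linearCombination ℝ (sourceWeight src s0))
  refine ⟨(appendCoords g).toAffineMap, ?_, fun x hx => ?_⟩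
  · simp_rw [flowPolytope_eq_convexHull_routeVectors, polytopeJoin_convexHull,
      ← image_appendCoords_routeVectors hconn hs0 hg, ← LinearMap.image_convexHull]
    exact (appendCoords_injective g).injOn.bijOn_image
  · obtain ⟨f, rfl⟩ := flowPolytope_subset_range_coe _ _ _ _ hx
    exact (isLatticePoint_appendCoords_iff g (isLatticePoint_sourceWeight src s0) hg f).symm

/-- Let `G_1, …, G_t` be DAGs sharing a common source and sink with
pairwise disjoint inner vertex sets, and let `G` be their union.  Then
`F_1(G)` is integrally equivalent to the join `F_1(G_1) ⋆ ⋯ ⋆ F_1(G_t)`. -/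
theorem flowPolytope_union_join {V : Type} [DecidableEq V] (t : ℕ) (ht : 0 < t)
    (E : Fin t → Type) [∀ i, DecidableEq (E i)]
    (src tgt : ∀ i, E i → V) (s0 t0 : V)
    (hacyc : ∃ ρ : V → ℕ, ∀ i (e : E i), ρ (src i e) < ρ (tgt i e))
    (hs0 : ∀ i (e : E i), tgt i e ≠ s0) (ht0 : ∀ i (e : E i), src i e ≠ t0)
    (hinner : ∀ i j, i ≠ j → ∀ v : V, v ≠ s0 → v ≠ t0 →
      ¬((∃ e : E i, src i e = v ∨ tgt i e = v) ∧
        (∃ e : E j, src j e = v ∨ tgt j e = v)))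
    (hio : ∀ i (v : V), v ≠ s0 → v ≠ t0 → (∃ e : E i, src i e = v ∨ tgt i e = v) →
      ((∃ e : E i, tgt i e = v) ∧ (∃ e : E i, src i e = v))) :
    IntegrallyEquivalent
      (flowPolytope (fun e : Σ j, E j => src e.1 e.2) (fun e : Σ j, E j => tgt e.1 e.2)
        s0 t0)
      (polytopeJoin E (fun i => flowPolytope (src i) (tgt i) s0 t0)) :=
  flowPolytope_union_join_general t E src tgt s0 t0 hs0 ht0 hinner
end

section
/- Let (G, F) be a full DAG with an ample framing, inducing an edge labeling of G by {1, 2} such that at each inner vertex the two incoming edges receive distinct labels and the two outgoing edges receive distinct labels. If every route of G switches edge labels at most twice (where a switch is a pair of consecutive edges along the route with different labels), then the g-polytope of (G,F) is locally anti-blocking. -/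
open Set

/-- A vertex is inner if it has both an incoming and an outgoing edge. -/
def InnerVtx {V E : Type*} (src tgt : E → V) (v : V) : Prop :=
  (∃ e, tgt e = v) ∧ (∃ e, src e = v)

/-- A route: a nonempty directed walk from a source vertex (no incoming edges) to a sink
vertex (no outgoing edges). -/
def IsRoute {V E : Type*} (src tgt : E → V) (L : List E) : Prop :=
  L ≠ [] ∧ ∃ a b : V, IsWalkFrom src tgt L a b ∧ (∀ e, tgt e ≠ a) ∧ (∀ e, src e ≠ b)

/-- The graph is acyclic: there is a compatible linear order on the vertices. -/
def IsAcyclic {V E : Type*} (src tgt : E → V) : Prop :=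
  ∃ ρ : V → ℕ, ∀ e, ρ (src e) < ρ (tgt e)

/-- An ample framing of a full DAG: a labeling of the edges by `{1, 2}` such that every
inner vertex has exactly two incoming edges with distinct labels and exactly two outgoing
edges with distinct labels. -/
def AmpleFraming {V E : Type*} (src tgt : E → V) (ℓ : E → ℕ) : Prop :=
  (∀ e, ℓ e = 1 ∨ ℓ e = 2) ∧
  ∀ v, InnerVtx src tgt v →
    (∃ e1 e2 : E, e1 ≠ e2 ∧ tgt e1 = v ∧ tgt e2 = v ∧ ℓ e1 ≠ ℓ e2 ∧
      ∀ e, tgt e = v → e = e1 ∨ e = e2) ∧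
    (∃ e1 e2 : E, e1 ≠ e2 ∧ src e1 = v ∧ src e2 = v ∧ ℓ e1 ≠ ℓ e2 ∧
      ∀ e, src e = v → e = e1 ∨ e = e2)

/-- A route is exceptional when all its edges carry the same framing label. -/
def ExceptionalRoute {V E : Type*} (src tgt : E → V) (ℓ : E → ℕ) (L : List E) : Prop :=
  IsRoute src tgt L ∧ ∀ e ∈ L, ∀ f ∈ L, ℓ e = ℓ f

/-- The framing is ample: every edge lies on an exceptional route. -/
def IsAmple {V E : Type*} (src tgt : E → V) (ℓ : E → ℕ) : Prop :=
  ∀ e : E, ∃ L : List E, ExceptionalRoute src tgt ℓ L ∧ e ∈ L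

/-- The contribution of a consecutive pair of edges of a route to the g-vector. -/
def gEntry {E : Type*} (ℓ : E → ℕ) (p : E × E) : ℝ :=
  if ℓ p.1 = 1 ∧ ℓ p.2 = 2 then -1 else if ℓ p.1 = 2 ∧ ℓ p.2 = 1 then 1 else 0

/-- The g-vector of a route, indexed by the inner vertices. -/
def gvec {V E : Type*} [DecidableEq V] (src tgt : E → V) (ℓ : E → ℕ) (L : List E) :
    {v : V // InnerVtx src tgt v} → ℝ :=
  fun v => ((L.zip L.tail).map (fun p => if tgt p.1 = v.1 then gEntry ℓ p else 0)).sum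

/-- The g-polytope: the convex hull of the g-vectors of all routes. -/
noncomputable def gPolytope {V E : Type*} [DecidableEq V] (src tgt : E → V)
    (ℓ : E → ℕ) : Set ({v : V // InnerVtx src tgt v} → ℝ) :=
  convexHull ℝ {x | ∃ L : List E, IsRoute src tgt L ∧ x = gvec src tgt ℓ L}

/-- The number of label switches along a route. -/
def switches {E : Type*} (ℓ : E → ℕ) (L : List E) : ℕ :=
  (L.zip L.tail).countP (fun p => ℓ p.1 != ℓ p.2)

/-!
By ampleness every edge lies on a monochromatic route. Hence `0` is a g-vector, and splicing a
monochromatic route through `e` (up to `e`) with one through `f` (from `f` on) gives a route whose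
only switch is `(e, f)`. The g-vector of a route is the sum of the contributions of its switches,
each supported on one vertex; with at most two switches, zeroing one coordinate leaves either the
route's own g-vector or the contribution of at most one switch, again a g-vector. So the
g-polytope is a convex set of finitely supported vectors closed under zeroing coordinates, and
such a set contains, with each point `x`, the whole box between `0` and `x`: in every orthant it
is anti-blocking.
-/

open Function

namespace List

theorem sum_map_filter_of_eq_zero {α M : Type*} [AddCommMonoid M] (p : α → Bool) (f : α → M)
    {l : List α} (h : ∀ a ∈ l, p a = false → f a = 0) :
    ((l.filter p).map f).sum = (l.map f).sum := by
  induction l with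
  | nil => rfl
  | cons a l ih =>
    rw [forall_mem_cons] at h
    cases hpa : p a <;> simp [hpa, ih h.2, h.1]

theorem zip_tail_append_cons_cons {α : Type*} (A D : List α) (e f : α) :
    (A ++ e :: f :: D).zip (A ++ e :: f :: D).tail =
      (A ++ [e]).zip (A ++ [e]).tail ++ (e, f) :: (f :: D).zip D := by
  induction A with
  | nil => simp
  | cons a A ih => cases A <;> simp_all

end List

section Convex

variable {ι : Type*} [DecidableEq ι]

theorem Convex.mem_of_forall_mem_uIcc {P : Set (ι → ℝ)} (hP : Convex ℝ P)
    (hzero : ∀ x ∈ P, ∀ i, update x i 0 ∈ P) {x y : ι → ℝ} (hx : x ∈ P)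
    (hfin : (support x).Finite) (hy : ∀ i, y i ∈ uIcc 0 (x i)) : y ∈ P := by
  suffices key : ∀ (s : Finset ι) (x y : ι → ℝ), x ∈ P → (∀ i, y i ∈ uIcc 0 (x i)) →
      (∀ i ∉ s, y i = x i) → y ∈ P by
    refine key hfin.toFinset x y hx hy fun i hi => ?_
    have hxi : x i = 0 := by simpa using hi
    simpa [hxi] using hy i
  -- Induct on the coordinates where `y` and `x` differ: `y` lies on the segment between
  -- its versions with `a`-th entry `0` and `x a`, both handled by the induction hypothesis.
  intro s
  induction s using Finset.induction_on with
  | empty =>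
    intro x y hx _ hxy
    rwa [funext fun i => hxy i (Finset.notMem_empty i)]
  | insert a s ha ih =>
    intro x y hx hy hxy
    have hoff : ∀ z : ι → ℝ, (∀ i ∉ insert a s, y i = z i) →
        ∀ i ∉ s, update y a (z a) i = z i := by
      intro z hz i hi
      by_cases hia : i = a
      · subst hia; simp
      · simpa [hia] using hz i (by simp [hia, hi])
    have hy₀ : update y a 0 ∈ P := by
      refine ih _ _ (hzero x hx a) (fun i => ?_) ?_
      · by_cases hia : i = a
        · subst hia; simp
        · simpa [hia] using hy i
      · simpa using hoff (update x a 0) (fun i hi => by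
          rw [update_of_ne (by rintro rfl; simp at hi)]; exact hxy i hi)
    have hy₁ : update y a (x a) ∈ P := by
      refine ih _ _ hx (fun i => ?_) (hoff x hxy)
      by_cases hia : i = a
      · subst hia; simp
      · simpa [hia] using hy i
    have hseg : y ∈ segment ℝ (update y a 0) (update y a (x a)) := by
      rw [← Pi.image_update_segment, segment_eq_uIcc]
      exact ⟨y a, hy a, update_eq_self a y⟩
    exact hP.segment_subset hy₀ hy₁ hseg

theorem Convex.locallyAntiBlocking {P : Set (ι → ℝ)} (hP : Convex ℝ P)
    (hzero : ∀ x ∈ P, ∀ i, update x i 0 ∈ P) (hfin : ∀ x ∈ P, (support x).Finite) :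
    LocallyAntiBlocking P := by
  rintro σ hσ _ ⟨⟨x, hx, rfl⟩, -⟩ y hy
  have hσσ : ∀ i, σ i * σ i = 1 := fun i => by rcases hσ i with h | h <;> simp [h]
  refine ⟨⟨fun i => σ i * y i, hP.mem_of_forall_mem_uIcc hzero hx (hfin x hx) fun i => ?_, ?_⟩,
    fun i => (hy i).1⟩
  · have h := mem_image_of_mem (σ i * ·) (Icc_subset_uIcc (hy i))
    rwa [image_const_mul_uIcc, mul_zero, ← mul_assoc, hσσ, one_mul] at h
  · funext i
    simp [← mul_assoc, hσσ]

end Convex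

section ConvexHull

variable {ι : Type*} {S : Set (ι → ℝ)}

theorem support_finite_of_mem_convexHull (hS : ∀ x ∈ S, (support x).Finite) {x : ι → ℝ}
    (hx : x ∈ convexHull ℝ S) : (support x).Finite := by
  have hconv : Convex ℝ {x : ι → ℝ | (support x).Finite} := by
    intro y hy z hz a b _ _ _
    exact ((hy.subset (support_const_smul_subset a y)).union
      (hz.subset (support_const_smul_subset b z))).subset (support_add _ _)
  exact convexHull_min hS hconv hx

theorem update_zero_mem_convexHull [DecidableEq ι]
    (hS : ∀ x ∈ S, ∀ i, update x i 0 ∈ convexHull ℝ S) {x : ι → ℝ} (hx : x ∈ convexHull ℝ S)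
    (i : ι) : update x i 0 ∈ convexHull ℝ S := by
  have hlin : IsLinearMap ℝ fun x : ι → ℝ => update x i 0 :=
    ⟨fun x y => by simpa using update_add x y i 0 0,
      fun c x => by simpa using update_smul c x i 0⟩
  exact convexHull_min (fun x hx => hS x hx i)
    ((convex_convexHull ℝ S).is_linear_preimage hlin) hx

end ConvexHull

section Routes

variable {V E : Type*} {src tgt : E → V}

theorem isWalkFrom_append {L₁ L₂ : List E} {a b : V} :
    IsWalkFrom src tgt (L₁ ++ L₂) a b ↔
      ∃ c, IsWalkFrom src tgt L₁ a c ∧ IsWalkFrom src tgt L₂ c b := by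
  induction L₁ generalizing a with
  | nil => simp [IsWalkFrom]
  | cons e L ih => simp [IsWalkFrom, ih, and_assoc]

theorem IsWalkFrom.tgt_eq_src_of_mem_zip_tail {L : List E} {a b : V}
    (h : IsWalkFrom src tgt L a b) {p : E × E} (hp : p ∈ L.zip L.tail) :
    tgt p.1 = src p.2 := by
  induction L generalizing a with
  | nil => simp at hp
  | cons e L ih =>
    cases L with
    | nil => simp at hp
    | cons f L =>
      rw [List.tail_cons, List.zip_cons_cons, List.mem_cons] at hp
      rcases hp with rfl | hp
      · exact h.2.1.symm
      · exact ih h.2 hp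

theorem IsRoute.tgt_eq_src_of_mem_zip_tail {L : List E} (hL : IsRoute src tgt L) {p : E × E}
    (hp : p ∈ L.zip L.tail) : tgt p.1 = src p.2 := by
  obtain ⟨-, a, b, hw, -⟩ := hL
  exact hw.tgt_eq_src_of_mem_zip_tail hp

theorem IsRoute.splice {A B C D : List E} {e f : E} (hM : IsRoute src tgt (A ++ e :: B))
    (hN : IsRoute src tgt (C ++ f :: D)) (hef : tgt e = src f) :
    IsRoute src tgt (A ++ e :: f :: D) := by
  obtain ⟨-, a, _, hMw, ha, -⟩ := hM
  obtain ⟨-, _, d, hNw, -, hd⟩ := hN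
  obtain ⟨c, hA, he, -⟩ := isWalkFrom_append.1 hMw
  obtain ⟨_, -, -, hD⟩ := isWalkFrom_append.1 hNw
  exact ⟨by simp, a, d, isWalkFrom_append.2 ⟨c, hA, he, hef.symm, hD⟩, ha, hd⟩

end Routes

section GVector

variable {V E : Type*} [DecidableEq V] {src tgt : E → V} {ℓ : E → ℕ}

def gvecPair (src tgt : E → V) (ℓ : E → ℕ) (p : E × E) :
    {v : V // InnerVtx src tgt v} → ℝ :=
  fun v => if tgt p.1 = v.1 then gEntry ℓ p else 0

def switchPairs (ℓ : E → ℕ) (L : List E) : List (E × E) :=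
  (L.zip L.tail).filter fun p => ℓ p.1 != ℓ p.2

theorem switches_eq_length_switchPairs (L : List E) :
    switches ℓ L = (switchPairs ℓ L).length :=
  List.countP_eq_length_filter

theorem gEntry_eq_zero {p : E × E} (h : ℓ p.1 = ℓ p.2) : gEntry ℓ p = 0 := by
  rw [gEntry, if_neg (by omega), if_neg (by omega)]

theorem gvec_eq_sum_gvecPair (L : List E) :
    gvec src tgt ℓ L = ((L.zip L.tail).map (gvecPair src tgt ℓ)).sum := by
  funext v
  rw [Pi.list_sum_apply, List.map_map]
  rfl

theorem gvec_eq_sum_switchPairs (L : List E) :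
    gvec src tgt ℓ L = ((switchPairs ℓ L).map (gvecPair src tgt ℓ)).sum := by
  rw [gvec_eq_sum_gvecPair, switchPairs, List.sum_map_filter_of_eq_zero]
  intro p _ hp
  funext v
  simp [gvecPair, gEntry_eq_zero (by simpa using hp)]

theorem gvec_eq_zero_of_forall_label_eq {L : List E} (h : ∀ e ∈ L, ∀ f ∈ L, ℓ e = ℓ f) :
    gvec src tgt ℓ L = 0 := by
  rw [gvec_eq_sum_switchPairs, switchPairs, List.filter_eq_nil_iff.2, List.map_nil, List.sum_nil]
  intro p hp
  have := List.of_mem_zip hp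
  simpa using h _ this.1 _ (List.mem_of_mem_tail this.2)

theorem gvec_append_cons_cons (A D : List E) (e f : E) :
    gvec src tgt ℓ (A ++ e :: f :: D) =
      gvec src tgt ℓ (A ++ [e]) + gvecPair src tgt ℓ (e, f) + gvec src tgt ℓ (f :: D) := by
  simp only [gvec_eq_sum_gvecPair, List.zip_tail_append_cons_cons, List.map_append,
    List.map_cons, List.sum_append, List.sum_cons, List.tail_cons, add_assoc]

theorem support_gvec_finite (L : List E) : (support (gvec src tgt ℓ L)).Finite := by
  refine ((L.map tgt).finite_toSet.preimage Subtype.val_injective.injOn).subset fun v hv => ?_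
  contrapose! hv
  rw [mem_support, not_not, gvec_eq_sum_gvecPair, Pi.list_sum_apply, List.map_map]
  refine List.sum_eq_zero fun x hx => ?_
  obtain ⟨p, hp, rfl⟩ := List.mem_map.1 hx
  exact if_neg fun h => hv (List.mem_map.2 ⟨p.1, (List.of_mem_zip hp).1, h⟩)

theorem update_zero_sum_gvecPair (S : List (E × E)) (v : {v : V // InnerVtx src tgt v}) :
    update (S.map (gvecPair src tgt ℓ)).sum v 0 =
      ((S.filter fun p => tgt p.1 ≠ v.1).map (gvecPair src tgt ℓ)).sum := by
  funext w
  rw [Pi.list_sum_apply]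
  by_cases hwv : w = v
  · subst hwv
    rw [update_self, List.map_map]
    refine (List.sum_eq_zero fun x hx => ?_).symm
    obtain ⟨p, hp, rfl⟩ := List.mem_map.1 hx
    simp [gvecPair, by simpa using (List.mem_filter.1 hp).2]
  · rw [update_of_ne hwv, Pi.list_sum_apply, List.map_map, List.map_map,
      List.sum_map_filter_of_eq_zero]
    intro p _ hp
    have hpw : tgt p.1 ≠ w.1 := fun h => hwv (Subtype.ext (h ▸ by simpa using hp))
    simp [gvecPair, hpw]

end GVector

section Ample

variable {V E : Type*} [DecidableEq V] {src tgt : E → V} {ℓ : E → ℕ}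

theorem exists_isRoute_gvec_eq_zero (hample : IsAmple src tgt ℓ) (e : E) :
    ∃ R, IsRoute src tgt R ∧ gvec src tgt ℓ R = 0 := by
  obtain ⟨R, ⟨hR, hRℓ⟩, -⟩ := hample e
  exact ⟨R, hR, gvec_eq_zero_of_forall_label_eq hRℓ⟩

theorem exists_isRoute_gvec_eq_gvecPair (hample : IsAmple src tgt ℓ) {e f : E}
    (hef : tgt e = src f) :
    ∃ R, IsRoute src tgt R ∧ gvec src tgt ℓ R = gvecPair src tgt ℓ (e, f) := by
  obtain ⟨M, ⟨hM, hMℓ⟩, heM⟩ := hample e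
  obtain ⟨N, ⟨hN, hNℓ⟩, hfN⟩ := hample f
  obtain ⟨A, B, rfl⟩ := List.append_of_mem heM
  obtain ⟨C, D, rfl⟩ := List.append_of_mem hfN
  refine ⟨A ++ e :: f :: D, hM.splice hN hef, ?_⟩
  rw [gvec_append_cons_cons, gvec_eq_zero_of_forall_label_eq, gvec_eq_zero_of_forall_label_eq,
    zero_add, add_zero]
  · intro x hx y hy
    exact hNℓ x (by simp_all) y (by simp_all)
  · intro x hx y hy
    apply hMℓ <;> simp at hx hy ⊢ <;> tauto

theorem IsRoute.exists_isRoute_gvec_eq_update_zero (hample : IsAmple src tgt ℓ) {L : List E}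
    (hL : IsRoute src tgt L) (hL₂ : switches ℓ L ≤ 2) (v : {v : V // InnerVtx src tgt v}) :
    ∃ R, IsRoute src tgt R ∧ gvec src tgt ℓ R = update (gvec src tgt ℓ L) v 0 := by
  set T := (switchPairs ℓ L).filter fun p => tgt p.1 ≠ v.1 with hT
  rw [gvec_eq_sum_switchPairs, update_zero_sum_gvecPair, ← hT]
  by_cases hTS : T = switchPairs ℓ L
  · exact ⟨L, hL, by rw [hTS, gvec_eq_sum_switchPairs]⟩
  have hlen : T.length ≤ 1 := by
    have hsub : T.Sublist (switchPairs ℓ L) := List.filter_sublist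
    have := hsub.length_le
    have := mt hsub.eq_of_length hTS
    rw [switches_eq_length_switchPairs] at hL₂
    omega
  rcases Nat.le_one_iff_eq_zero_or_eq_one.1 hlen with h₀ | h₁
  · rw [List.length_eq_zero_iff.1 h₀, List.map_nil, List.sum_nil]
    exact exists_isRoute_gvec_eq_zero hample (L.head hL.1)
  · obtain ⟨p, hp⟩ := List.length_eq_one_iff.1 h₁
    have hpL : p ∈ L.zip L.tail :=
      List.mem_of_mem_filter (List.mem_of_mem_filter (hp ▸ List.mem_singleton_self p))
    rw [hp, List.map_singleton, List.sum_singleton]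
    exact exists_isRoute_gvec_eq_gvecPair hample (hL.tgt_eq_src_of_mem_zip_tail hpL)

theorem update_zero_mem_gPolytope (hample : IsAmple src tgt ℓ)
    (hsw : ∀ L : List E, IsRoute src tgt L → switches ℓ L ≤ 2)
    {x : {v : V // InnerVtx src tgt v} → ℝ} (hx : x ∈ gPolytope src tgt ℓ)
    (v : {v : V // InnerVtx src tgt v}) :
    update x v 0 ∈ gPolytope src tgt ℓ := by
  refine update_zero_mem_convexHull ?_ hx v
  rintro _ ⟨L, hL, rfl⟩ v
  obtain ⟨R, hR, hRL⟩ := hL.exists_isRoute_gvec_eq_update_zero hample (hsw L hL) v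
  exact subset_convexHull ℝ _ ⟨R, hR, hRL.symm⟩

theorem support_finite_of_mem_gPolytope {x : {v : V // InnerVtx src tgt v} → ℝ}
    (hx : x ∈ gPolytope src tgt ℓ) : (support x).Finite := by
  refine support_finite_of_mem_convexHull ?_ hx
  rintro _ ⟨L, -, rfl⟩
  exact support_gvec_finite L

end Ample

theorem gPolytope_locallyAntiBlocking_of_switches_le_two_general {V E : Type}
    [DecidableEq V] (src tgt : E → V) (ℓ : E → ℕ)
    (hample : IsAmple src tgt ℓ)
    (hsw : ∀ L : List E, IsRoute src tgt L → switches ℓ L ≤ 2) :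
    LocallyAntiBlocking (gPolytope src tgt ℓ) :=
  (convex_convexHull ℝ _).locallyAntiBlocking (fun _ => update_zero_mem_gPolytope hample hsw)
    fun _ => support_finite_of_mem_gPolytope

/-- Let `(G, F)` be a full DAG with an ample framing.  If every route of
`G` switches edge labels at most twice, then the g-polytope of `(G, F)` is locally
anti-blocking. -/
theorem gPolytope_locallyAntiBlocking_of_switches_le_two {V E : Type}
    [DecidableEq V] (src tgt : E → V) (ℓ : E → ℕ)
    (hacyc : IsAcyclic src tgt)
    (hframe : AmpleFraming src tgt ℓ)
    (hample : IsAmple src tgt ℓ)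
    (hsw : ∀ L : List E, IsRoute src tgt L → switches ℓ L ≤ 2) :
    LocallyAntiBlocking (gPolytope src tgt ℓ) :=
  gPolytope_locallyAntiBlocking_of_switches_le_two_general src tgt ℓ hample hsw
end

section
/- Let (G, F) be an amply framed full DAG whose g-polytope P is locally anti-blocking. Then every route of G switches edge labels at most twice, i.e., every g-vector of a route has at most two nonzero coordinates. -/
open Set

/-!
If a route switches three times, two of its switches, at inner vertices `v` and `w` with
`ρ v < ρ w` for a topological order `ρ`, have the same sign `s = ±1`. Local anti-blocking lets
us zero out all other coordinates of its g-vector, so `s • (e_v + e_w)` lies in the g-polytope,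
and its coordinates over the window `ρ ∈ [ρ v, ρ w]` sum to `2 s`. On the other hand, along a
route the g-vector entries are the label differences `ℓ eᵢ - ℓ eᵢ₊₁`, which over a window of
consecutive vertices telescope to a difference of two labels in `{1, 2}`; so every g-vector,
hence every point of the g-polytope, has window sums of absolute value at most `1`.
-/

lemma List.IsChain.rel_of_mem_zip_tail {α : Type*} {R : α → α → Prop} {l : List α}
    (hl : l.IsChain R) {p : α × α} (hp : p ∈ l.zip l.tail) : R p.1 p.2 := by
  induction l with
  | nil => simp at hp
  | cons a l ih =>
    cases l with
    | nil => simp at hp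
    | cons b l =>
      obtain ⟨hab, hl⟩ := List.isChain_cons_cons.mp hl
      rcases List.mem_cons.mp hp with rfl | hp
      · exact hab
      · exact ih hl hp

lemma List.Pairwise.zip_tail_fst {α : Type*} {R : α → α → Prop} {l : List α}
    (hl : l.Pairwise R) : (l.zip l.tail).Pairwise fun p q => R p.1 q.1 := by
  induction l with
  | nil => simp
  | cons a l ih =>
    cases l with
    | nil => simp
    | cons b l =>
      refine List.Pairwise.cons (fun q hq => ?_) (ih hl.of_cons)
      exact List.rel_of_pairwise_cons hl (List.of_mem_zip hq).1

lemma List.sum_map_ite_eq_of_pairwise_ne {β γ : Type*} [DecidableEq γ] (key : β → γ)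
    (g : β → ℝ) {Z : List β} (hZ : Z.Pairwise fun p q => key p ≠ key q) {p : β}
    (hp : p ∈ Z) : (Z.map fun q => if key q = key p then g q else 0).sum = g p := by
  induction Z with
  | nil => simp at hp
  | cons q Z ih =>
    rw [List.map_cons, List.sum_cons]
    rcases List.mem_cons.mp hp with rfl | hp
    · refine (add_eq_left.mpr (List.sum_eq_zero fun x hx => ?_)).trans (if_pos rfl)
      obtain ⟨q', hq', rfl⟩ := List.mem_map.mp hx
      exact if_neg (List.rel_of_pairwise_cons hZ hq').symm
    · rw [if_neg (List.rel_of_pairwise_cons hZ hp), zero_add, ih hZ.of_cons hp]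

section WindowSum

variable {α : Type*} (f : α → ℝ) (r : α → ℕ) (A B : ℕ)

def windowSum (l : List α) : ℝ :=
  ((l.zip l.tail).map fun p => if A ≤ r p.1 ∧ r p.1 ≤ B then f p.1 - f p.2 else 0).sum

variable {f r A B}

lemma windowSum_cons_cons (a b : α) (l : List α) :
    windowSum f r A B (a :: b :: l) =
      (if A ≤ r a ∧ r a ≤ B then f a - f b else 0) + windowSum f r A B (b :: l) := by
  simp [windowSum]

lemma windowSum_cons_of_lt (a : α) (l : List α) (ha : r a < A) :
    windowSum f r A B (a :: l) = windowSum f r A B l := by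
  cases l with
  | nil => rfl
  | cons b l => simp [windowSum_cons_cons, ha.not_ge]

lemma windowSum_cons_of_isChain {a : α} {l : List α}
    (hl : (a :: l).IsChain fun x y => r x ≤ r y) :
    (B < r a → windowSum f r A B (a :: l) = 0) ∧
      (A ≤ r a → ∃ c, windowSum f r A B (a :: l) = f a - f c) := by
  induction l generalizing a with
  | nil => exact ⟨fun _ => rfl, fun _ => ⟨a, (sub_self _).symm⟩⟩
  | cons b l ih =>
    obtain ⟨hab, hl⟩ := List.isChain_cons_cons.mp hl
    obtain ⟨ihB, ihA⟩ := ih hl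
    rw [windowSum_cons_cons]
    refine ⟨fun hB => ?_, fun hA => ?_⟩
    · rw [if_neg fun h => h.2.not_gt hB, ihB (hB.trans_le hab), add_zero]
    · rcases le_or_gt (r a) B with hB | hB
      · obtain ⟨c, hc⟩ := ihA (hA.trans hab)
        exact ⟨c, by rw [if_pos ⟨hA, hB⟩, hc]; ring⟩
      · rw [if_neg fun h => hB.not_ge h.2, ihB (hB.trans_le hab), add_zero]
        exact ⟨a, (sub_self _).symm⟩

/-- Monotonicity of `r` along `l` makes the window a contiguous block, so the sum telescopes
to a single difference `f a - f c`. -/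
lemma abs_windowSum_le {l : List α} (hl : l.IsChain fun x y => r x ≤ r y)
    (hf : ∀ x y, |f x - f y| ≤ 1) : |windowSum f r A B l| ≤ 1 := by
  induction l with
  | nil => simp [windowSum]
  | cons a l ih =>
    by_cases ha : A ≤ r a
    · obtain ⟨c, hc⟩ := (windowSum_cons_of_isChain hl).2 ha
      exact hc ▸ hf a c
    · rw [windowSum_cons_of_lt a l (not_le.mp ha)]
      exact ih hl.tail

end WindowSum

lemma abs_sum_le_of_mem_convexHull {ι : Type*} {s : Set (ι → ℝ)} {T : Finset ι} {c : ℝ}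
    (hs : ∀ x ∈ s, |∑ i ∈ T, x i| ≤ c) {q : ι → ℝ} (hq : q ∈ convexHull ℝ s) :
    |∑ i ∈ T, q i| ≤ c := by
  have hconv : Convex ℝ {x : ι → ℝ | |∑ i ∈ T, x i| ≤ c} := by
    simpa [Set.preimage, Real.norm_eq_abs] using
      (convex_closedBall (0 : ℝ) c).linear_preimage (∑ i ∈ T, LinearMap.proj i)
  exact convexHull_min hs hconv hq

/-- Flip signs so that `x` lands in the nonnegative orthant, zero out the coordinates outside
`S` there, and flip back. -/
lemma LocallyAntiBlocking.indicator_mem {ι : Type*} {P : Set (ι → ℝ)}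
    (hP : LocallyAntiBlocking P) {x : ι → ℝ} (hx : x ∈ P) (S : Set ι) : S.indicator x ∈ P := by
  classical
  set σ : ι → ℝ := fun i => if 0 ≤ x i then 1 else -1
  have hσ : ∀ i, σ i = 1 ∨ σ i = -1 := fun i => by by_cases h : 0 ≤ x i <;> simp [σ, h]
  have hσx : ∀ i, 0 ≤ σ i * x i := fun i => by
    by_cases h : 0 ≤ x i
    · simp [σ, h]
    · simp only [σ, if_neg h]; linarith
  have hy : ∀ i, 0 ≤ S.indicator (fun i => σ i * x i) i ∧
      S.indicator (fun i => σ i * x i) i ≤ σ i * x i := fun i => by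
    by_cases hi : i ∈ S <;> simp [Set.indicator, hi, hσx i]
  obtain ⟨⟨q, hq, hqy⟩, -⟩ := hP σ hσ _ ⟨⟨x, hx, rfl⟩, hσx⟩ _ hy
  convert hq using 1
  funext i
  have hσσ : σ i * σ i = 1 := by rcases hσ i with h | h <;> rw [h] <;> norm_num
  calc S.indicator x i = σ i * S.indicator (fun i => σ i * x i) i := by
        by_cases hi : i ∈ S <;> simp [Set.indicator, hi, ← mul_assoc, hσσ]
    _ = q i := by rw [← congrFun hqy i, ← mul_assoc, hσσ, one_mul]

section Labels

variable {E : Type*} {ℓ : E → ℕ}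

lemma gEntry_eq_sub (hlabels : ∀ e, ℓ e = 1 ∨ ℓ e = 2) (p : E × E) :
    gEntry ℓ p = (ℓ p.1 : ℝ) - ℓ p.2 := by
  rcases hlabels p.1 with h1 | h1 <;> rcases hlabels p.2 with h2 | h2 <;> norm_num [gEntry, h1, h2]

lemma gEntry_eq_one_or_neg_one (hlabels : ∀ e, ℓ e = 1 ∨ ℓ e = 2) {p : E × E}
    (hp : ℓ p.1 ≠ ℓ p.2) : gEntry ℓ p = 1 ∨ gEntry ℓ p = -1 := by
  rcases hlabels p.1 with h1 | h1 <;> rcases hlabels p.2 with h2 | h2 <;> simp_all [gEntry]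

lemma exists_pair_gEntry_eq_of_two_lt_countP (hlabels : ∀ e, ℓ e = 1 ∨ ℓ e = 2)
    {R : E × E → E × E → Prop} {Z : List (E × E)} (hZ : Z.Pairwise R)
    (h : 2 < Z.countP fun p => ℓ p.1 != ℓ p.2) :
    ∃ p ∈ Z, ∃ q ∈ Z, R p q ∧ gEntry ℓ q = gEntry ℓ p ∧ |gEntry ℓ p| = 1 := by
  rw [List.countP_eq_length_filter] at h
  obtain ⟨p₀, p₁, p₂, rest, hF⟩ : ∃ p₀ p₁ p₂ rest,
      Z.filter (fun p => ℓ p.1 != ℓ p.2) = p₀ :: p₁ :: p₂ :: rest := by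
    rcases hZF : Z.filter (fun p => ℓ p.1 != ℓ p.2) with _ | ⟨p₀, _ | ⟨p₁, _ | ⟨p₂, rest⟩⟩⟩ <;>
      simp_all
  have hmem : ∀ p ∈ p₀ :: p₁ :: p₂ :: rest, p ∈ Z ∧ ℓ p.1 ≠ ℓ p.2 := by
    intro p hp
    rwa [← hF, List.mem_filter, bne_iff_ne] at hp
  have hR : R p₀ p₁ ∧ R p₀ p₂ ∧ R p₁ p₂ := by
    have := hF ▸ hZ.filter (fun p : E × E => ℓ p.1 != ℓ p.2)
    simp_all
  obtain ⟨hZ₀, hs₀⟩ := hmem p₀ (by simp)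
  obtain ⟨hZ₁, hs₁⟩ := hmem p₁ (by simp)
  obtain ⟨hZ₂, hs₂⟩ := hmem p₂ (by simp)
  have habs : ∀ p, ℓ p.1 ≠ ℓ p.2 → |gEntry ℓ p| = 1 := fun p hp => by
    rcases gEntry_eq_one_or_neg_one hlabels hp with h | h <;> simp [h]
  by_cases h₀₁ : gEntry ℓ p₁ = gEntry ℓ p₀
  · exact ⟨p₀, hZ₀, p₁, hZ₁, hR.1, h₀₁, habs p₀ hs₀⟩
  by_cases h₀₂ : gEntry ℓ p₂ = gEntry ℓ p₀
  · exact ⟨p₀, hZ₀, p₂, hZ₂, hR.2.1, h₀₂, habs p₀ hs₀⟩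
  refine ⟨p₁, hZ₁, p₂, hZ₂, hR.2.2, ?_, habs p₁ hs₁⟩
  rcases gEntry_eq_one_or_neg_one hlabels hs₀ with h₀ | h₀ <;>
    rcases gEntry_eq_one_or_neg_one hlabels hs₁ with h₁ | h₁ <;>
    rcases gEntry_eq_one_or_neg_one hlabels hs₂ with h₂ | h₂ <;> simp_all

end Labels

section Walks

variable {V E : Type*} {src tgt : E → V} {ℓ : E → ℕ} {ρ : V → ℕ}

lemma IsWalkFrom.isChain {L : List E} {a b : V} (hw : IsWalkFrom src tgt L a b) :
    L.IsChain fun e f => tgt e = src f := by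
  induction L generalizing a with
  | nil => exact .nil
  | cons e L ih =>
    cases L with
    | nil => exact .singleton e
    | cons f L => exact .cons_cons hw.2.1.symm (ih hw.2)

lemma IsWalkFrom.pairwise_lt (hρ : ∀ e, ρ (src e) < ρ (tgt e)) {L : List E} {a b : V}
    (hw : IsWalkFrom src tgt L a b) : L.Pairwise fun e f => ρ (tgt e) < ρ (tgt f) := by
  have hchain : (L.map (ρ ∘ tgt)).IsChain (· < ·) :=
    (List.isChain_map _).mpr <| hw.isChain.imp fun e f (h : tgt e = src f) =>
      show ρ (tgt e) < ρ (tgt f) from h ▸ hρ f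
  exact List.pairwise_map.mp (List.isChain_iff_pairwise.mp hchain)

lemma IsWalkFrom.innerVtx_of_mem_zip {L : List E} {a b : V} (hw : IsWalkFrom src tgt L a b)
    {p : E × E} (hp : p ∈ L.zip L.tail) : InnerVtx src tgt (tgt p.1) :=
  ⟨⟨p.1, rfl⟩, ⟨p.2, (hw.isChain.rel_of_mem_zip_tail hp).symm⟩⟩

variable [DecidableEq V]

lemma IsWalkFrom.gvec_apply_of_mem_zip (hρ : ∀ e, ρ (src e) < ρ (tgt e)) {L : List E}
    {a b : V} (hw : IsWalkFrom src tgt L a b) {p : E × E} (hp : p ∈ L.zip L.tail) :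
    gvec src tgt ℓ L ⟨tgt p.1, hw.innerVtx_of_mem_zip hp⟩ = gEntry ℓ p :=
  List.sum_map_ite_eq_of_pairwise_ne (tgt ∘ Prod.fst) _
    ((hw.pairwise_lt hρ).zip_tail_fst.imp fun h heq => h.ne (congrArg ρ heq)) hp

variable [DecidablePred (InnerVtx src tgt)]

lemma sum_subtype_gvec (T : Finset V) (L : List E) :
    ∑ u ∈ T.subtype (InnerVtx src tgt), gvec src tgt ℓ L u =
      ((L.zip L.tail).map fun p =>
        if tgt p.1 ∈ T.filter (InnerVtx src tgt) then gEntry ℓ p else 0).sum := by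
  unfold gvec
  induction L.zip L.tail with
  | nil => simp
  | cons p Z ih =>
    simp only [List.map_cons, List.sum_cons, Finset.sum_add_distrib, ih,
      Finset.sum_subtype_eq_sum_filter (f := fun v => if tgt p.1 = v then gEntry ℓ p else 0),
      Finset.sum_ite_eq]

lemma IsWalkFrom.abs_sum_gvec_le (hρ : ∀ e, ρ (src e) < ρ (tgt e))
    (hlabels : ∀ e, ℓ e = 1 ∨ ℓ e = 2) {L : List E} {a b : V}
    (hw : IsWalkFrom src tgt L a b) {A B : ℕ} {T : Finset V}
    (hT : ∀ p ∈ L.zip L.tail, tgt p.1 ∈ T ↔ A ≤ ρ (tgt p.1) ∧ ρ (tgt p.1) ≤ B) :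
    |∑ u ∈ T.subtype (InnerVtx src tgt), gvec src tgt ℓ L u| ≤ 1 := by
  have hwindow : ∑ u ∈ T.subtype (InnerVtx src tgt), gvec src tgt ℓ L u =
      windowSum (fun e => (ℓ e : ℝ)) (ρ ∘ tgt) A B L := by
    rw [sum_subtype_gvec]
    refine congrArg List.sum (List.map_congr_left fun p hp => ?_)
    simp only [Finset.mem_filter, hw.innerVtx_of_mem_zip hp, and_true, hT p hp,
      gEntry_eq_sub hlabels, Function.comp_apply]
  rw [hwindow]
  refine abs_windowSum_le ((hw.pairwise_lt hρ).isChain.imp fun _ _ => le_of_lt) fun x y => ?_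
  rcases hlabels x with hx | hx <;> rcases hlabels y with hy | hy <;> norm_num [hx, hy]

/-- The window functional is only bounded on g-vectors of routes whose window vertices it
sees in full, so the window `T` is chosen after writing `q` as a convex combination of
finitely many routes. -/
lemma exists_superset_abs_sum_le_of_mem_gPolytope (hρ : ∀ e, ρ (src e) < ρ (tgt e))
    (hlabels : ∀ e, ℓ e = 1 ∨ ℓ e = 2) {q : {v : V // InnerVtx src tgt v} → ℝ}
    (hq : q ∈ gPolytope src tgt ℓ) {A B : ℕ} (W : Finset V)
    (hW : ∀ v ∈ W, A ≤ ρ v ∧ ρ v ≤ B) :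
    ∃ T : Finset V, W ⊆ T ∧ |∑ u ∈ T.subtype (InnerVtx src tgt), q u| ≤ 1 := by
  rw [gPolytope, convexHull_eq_union_convexHull_finite_subsets, Set.mem_iUnion₂] at hq
  obtain ⟨t, hts, hqt⟩ := hq
  choose! R hR using fun x (hx : x ∈ t) => hts hx
  let T := W ∪ (t.biUnion fun x => (((R x).zip (R x).tail).map (tgt ∘ Prod.fst)).toFinset).filter
    fun v => A ≤ ρ v ∧ ρ v ≤ B
  refine ⟨T, Finset.subset_union_left, abs_sum_le_of_mem_convexHull (fun x hx => ?_) hqt⟩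
  obtain ⟨⟨-, a, b, hw, -⟩, hxR⟩ := hR x hx
  rw [hxR]
  refine hw.abs_sum_gvec_le (A := A) (B := B) hρ hlabels fun p hp =>
    ⟨fun hpT => ?_, fun hwin => ?_⟩
  · rcases Finset.mem_union.mp hpT with hpW | hpF
    · exact hW _ hpW
    · exact (Finset.mem_filter.mp hpF).2
  · refine Finset.mem_union_right _ (Finset.mem_filter.mpr ⟨?_, hwin⟩)
    exact Finset.mem_biUnion.mpr ⟨x, hx, List.mem_toFinset.mpr (List.mem_map_of_mem hp)⟩

end Walks

theorem switches_le_two_of_gPolytope_locallyAntiBlocking_general {V E : Type}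
    [DecidableEq V] (src tgt : E → V) (ℓ : E → ℕ)
    (hacyc : IsAcyclic src tgt)
    (hframe : AmpleFraming src tgt ℓ)
    (hlab : LocallyAntiBlocking (gPolytope src tgt ℓ)) :
    ∀ L : List E, IsRoute src tgt L → switches ℓ L ≤ 2 := by
  classical
  intro L hL
  by_contra! hswitch
  obtain ⟨ρ, hρ⟩ := hacyc
  obtain ⟨a, b, hw, -⟩ := hL.2
  obtain ⟨p, hp, p', hp', hlt, hsign, hunit⟩ :=
    exists_pair_gEntry_eq_of_two_lt_countP hframe.1 (hw.pairwise_lt hρ).zip_tail_fst hswitch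
  let w : {v // InnerVtx src tgt v} := ⟨tgt p.1, hw.innerVtx_of_mem_zip hp⟩
  let w' : {v // InnerVtx src tgt v} := ⟨tgt p'.1, hw.innerVtx_of_mem_zip hp'⟩
  have hww' : w ≠ w' := fun h => hlt.ne (congrArg (ρ ∘ Subtype.val) h)
  have hq : (({w, w'} : Finset _) : Set _).indicator (gvec src tgt ℓ L) ∈ gPolytope src tgt ℓ :=
    hlab.indicator_mem (subset_convexHull ℝ _ ⟨L, hL, rfl⟩) _
  obtain ⟨T, hWT, hT⟩ := exists_superset_abs_sum_le_of_mem_gPolytope hρ hframe.1 hq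
    (A := ρ w) (B := ρ w') {w.1, w'.1} (by simpa using hlt.le)
  have hsum : ∑ u ∈ T.subtype (InnerVtx src tgt),
      (({w, w'} : Finset _) : Set _).indicator (gvec src tgt ℓ L) u = 2 * gEntry ℓ p := by
    rw [Finset.sum_indicator_subset _ (by simpa [Finset.insert_subset_iff] using hWT),
      Finset.sum_pair hww', hw.gvec_apply_of_mem_zip hρ hp, hw.gvec_apply_of_mem_zip hρ hp',
      hsign]
    ring
  rw [hsum, abs_mul, hunit] at hT
  norm_num at hT

/-- Let `(G, F)` be an amply framed full DAG whose g-polytope is locally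
anti-blocking.  Then every route of `G` switches edge labels at most twice. -/
theorem switches_le_two_of_gPolytope_locallyAntiBlocking {V E : Type}
    [DecidableEq V] (src tgt : E → V) (ℓ : E → ℕ)
    (hacyc : IsAcyclic src tgt)
    (hframe : AmpleFraming src tgt ℓ)
    (hample : IsAmple src tgt ℓ)
    (hlab : LocallyAntiBlocking (gPolytope src tgt ℓ)) :
    ∀ L : List E, IsRoute src tgt L → switches ℓ L ≤ 2 :=
  switches_le_two_of_gPolytope_locallyAntiBlocking_general src tgt ℓ hacyc hframe hlab
end
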